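/- Let m ≥ 1, let g₁, …, g_m : ℕ → ℝ be square-summable scalar signals, and let k₁, …, k_m > 0. For α ∈ ℝ^m and t ∈ ℕ^m let y(α,t) : ℕ → ℝ^m be the signal whose i-th component at time t' is α_i · (shift_{t_i} g_i)(t'). Then the supremum of { ‖y(α,t)‖₂ : α ∈ ℝ^m with |α_i| ≤ k_i for all i, t ∈ ℕ^m } equals (∑_{i=1}^m k_i² ∑_{t=0}^∞ g_i(t)²)^{1/2}. (Sensitivity of a diagonal m-input m-output LTI system under the event-stream adjacency relation.) -/

import Mathlib

/-! The components of the output live on orthogonal coordinates, so the squared ℓ²-norm of the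
output is `∑ i, α i ^ 2 * ∑' t, g i t ^ 2` whatever the shifts are. The supremum is therefore
a maximum, attained at `α = k` (and any `t`). -/

/-- Time shift of a signal: `(shift t₀ g) t = g (t - t₀)` if `t ≥ t₀`, and `0` otherwise. -/
noncomputable def shift {E : Type*} [Zero E] (t₀ : ℕ) (g : ℕ → E) : ℕ → E :=
  fun t => if t₀ ≤ t then g (t - t₀) else 0

/-- ℓ²-norm of a signal. -/
noncomputable def l2norm {E : Type*} [NormedAddCommGroup E] (y : ℕ → E) : ℝ :=
  Real.sqrt (∑' t, ‖y t‖ ^ 2)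

section Shift

variable {E F : Type*}

lemma shift_comp_add [Zero E] (t₀ : ℕ) (g : ℕ → E) : shift t₀ g ∘ (· + t₀) = g := by
  funext n
  simp [shift]

lemma support_shift_subset_range [Zero E] (t₀ : ℕ) (g : ℕ → E) :
    Function.support (shift t₀ g) ⊆ Set.range (· + t₀) := by
  intro t ht
  by_cases h : t₀ ≤ t
  · exact ⟨t - t₀, Nat.sub_add_cancel h⟩
  · simp [shift, h] at ht

lemma comp_shift [Zero E] [Zero F] (φ : E → F) (hφ : φ 0 = 0) (t₀ : ℕ) (g : ℕ → E) :
    φ ∘ shift t₀ g = shift t₀ (φ ∘ g) := by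
  funext t
  by_cases h : t₀ ≤ t <;> simp [shift, h, hφ]

variable [AddCommMonoid E] [TopologicalSpace E]

lemma hasSum_shift_iff (t₀ : ℕ) (g : ℕ → E) (a : E) : HasSum (shift t₀ g) a ↔ HasSum g a := by
  rw [← (add_left_injective t₀).hasSum_iff fun t ht =>
    Function.notMem_support.mp fun hs => ht (support_shift_subset_range t₀ g hs),
    shift_comp_add]

lemma summable_shift_iff (t₀ : ℕ) (g : ℕ → E) : Summable (shift t₀ g) ↔ Summable g :=
  exists_congr fun a => hasSum_shift_iff t₀ g a

lemma tsum_shift (t₀ : ℕ) (g : ℕ → E) : ∑' t, shift t₀ g t = ∑' t, g t := by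
  rw [← (add_left_injective t₀).tsum_eq (support_shift_subset_range t₀ g)]
  exact congrArg tsum (shift_comp_add t₀ g)

end Shift

lemma l2norm_euclideanSpace {𝕜 ι : Type*} [RCLike 𝕜] [Fintype ι] (y : ℕ → EuclideanSpace 𝕜 ι)
    (hy : ∀ i, Summable fun t => ‖y t i‖ ^ 2) :
    l2norm y = Real.sqrt (∑ i, ∑' t, ‖y t i‖ ^ 2) := by
  simp only [l2norm, EuclideanSpace.norm_sq_eq]
  rw [Summable.tsum_finsetSum fun i _ => hy i]

lemma shift_sq (t₀ : ℕ) (g : ℕ → ℝ) (t : ℕ) :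
    shift t₀ g t ^ 2 = shift t₀ (fun s => g s ^ 2) t :=
  congrFun (comp_shift (· ^ 2) (zero_pow two_ne_zero) t₀ g) t

lemma l2norm_diagonal_shift {m : ℕ} (g : Fin m → ℕ → ℝ) (hg : ∀ i, Summable fun t => g i t ^ 2)
    (α : Fin m → ℝ) (t : Fin m → ℕ) :
    l2norm (fun t' => (WithLp.toLp 2 (fun i => α i * shift (t i) (g i) t') :
      EuclideanSpace ℝ (Fin m))) = Real.sqrt (∑ i, α i ^ 2 * ∑' s, g i s ^ 2) := by
  rw [l2norm_euclideanSpace]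
  · simp only [Real.norm_eq_abs, sq_abs, mul_pow, shift_sq, tsum_mul_left, tsum_shift]
  · intro i
    simp only [Real.norm_eq_abs, sq_abs, mul_pow, shift_sq]
    exact ((summable_shift_iff _ _).mpr (hg i)).mul_left _

theorem diagonal_sensitivity (m : ℕ)
    (g : Fin m → ℕ → ℝ)
    (hg : ∀ i, Summable fun t => (g i t) ^ 2)
    (k : Fin m → ℝ) (hk : ∀ i, 0 < k i) :
    sSup {x : ℝ | ∃ (α : Fin m → ℝ) (t : Fin m → ℕ), (∀ i, |α i| ≤ k i) ∧
        x = l2norm (fun t' => (WithLp.toLp 2 (fun i => α i * shift (t i) (g i) t') :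
          EuclideanSpace ℝ (Fin m)))} =
      Real.sqrt (∑ i, k i ^ 2 * ∑' t, (g i t) ^ 2) := by
  refine IsGreatest.csSup_eq ⟨⟨k, 0, fun i => (abs_of_pos (hk i)).le, ?_⟩, ?_⟩
  · rw [l2norm_diagonal_shift g hg]
  · rintro _ ⟨α, t, hα, rfl⟩
    rw [l2norm_diagonal_shift g hg]
    refine Real.sqrt_le_sqrt (Finset.sum_le_sum fun i _ => ?_)
    exact mul_le_mul_of_nonneg_right (sq_le_sq' (neg_le_of_abs_le (hα i)) (le_of_abs_le (hα i)))
      (tsum_nonneg fun s => sq_nonneg _)
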